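/- Let X = ℝ₊ be the set of positive real numbers and let R : X³ → X³ be the electric network map R(x,y,z) = ( x·y/(x+z+x·y·z), x+z+x·y·z, z·y/(x+z+x·y·z) ). Then R is an involution, R ∘ R = Id, and R is reversible, i.e. τ₁₃ ∘ R ∘ τ₁₃ ∘ R = Id, where τ₁₃(x,y,z) = (z,y,x). -/

import Mathlib

/-- The positive real numbers. -/
abbrev PReal : Type := {x : ℝ // 0 < x}

/-- The electric network map on positive reals. -/
noncomputable def electricMap : PReal × PReal × PReal → PReal × PReal × PReal :=
  fun (⟨x, hx⟩, ⟨y, hy⟩, ⟨z, hz⟩) =>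
    (⟨x * y / (x + z + x * y * z), by positivity⟩,
     ⟨x + z + x * y * z, by positivity⟩,
     ⟨z * y / (x + z + x * y * z), by positivity⟩)

/-- The permutation of the first and third components of a triple. -/
def tau13 {X : Type*} : X × X × X → X × X × X := fun (x, y, z) => (z, y, x)

/-! Writing `S = x + z + x y z`, the image `(x', S, z') = (x y / S, S, z y / S)` satisfies
`x' + z' + x' S z' = y (x + z + x y z) / S = y`, so applying the map again recovers `(x, y, z)`.
The map is symmetric in `x` and `z`, i.e. commutes with `τ₁₃`, and reversibility follows from
the two involutions. -/

theorem electricMap_involutive : Function.Involutive electricMap := by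
  rintro ⟨⟨x, hx⟩, ⟨y, hy⟩, ⟨z, hz⟩⟩
  have hS : 0 < x + z + x * y * z := by positivity
  have hdenom : x * y / (x + z + x * y * z) + z * y / (x + z + x * y * z) +
      x * y / (x + z + x * y * z) * (x + z + x * y * z) * (z * y / (x + z + x * y * z)) = y := by
    field_simp
  simp only [electricMap, hdenom, Prod.mk.injEq, Subtype.mk.injEq]
  refine ⟨?_, trivial, ?_⟩ <;> field_simp

theorem tau13_involutive {X : Type*} : Function.Involutive (tau13 : X × X × X → X × X × X) :=
  fun _ => rfl

theorem tau13_electricMap (p : PReal × PReal × PReal) :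
    tau13 (electricMap p) = electricMap (tau13 p) := by
  obtain ⟨⟨x, hx⟩, ⟨y, hy⟩, ⟨z, hz⟩⟩ := p
  simp only [electricMap, tau13, Prod.mk.injEq, Subtype.mk.injEq]
  refine ⟨?_, ?_, ?_⟩ <;> ring

/-- the electric network map is an involution and is reversible. -/
theorem electricMap_involution_reversible :
    (electricMap ∘ electricMap = id) ∧
    (tau13 ∘ electricMap ∘ tau13 ∘ electricMap = id) := by
  refine ⟨electricMap_involutive.comp_self, ?_⟩
  funext p
  calc tau13 (electricMap (tau13 (electricMap p)))
      = electricMap (tau13 (tau13 (electricMap p))) := tau13_electricMap _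
    _ = p := by rw [tau13_involutive, electricMap_involutive]
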